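/- arXiv:1812.11839 — 5 statements merged into one kernel-verified Lean document; each statement's English description precedes it below -/
import Mathlib

section
/- For every n ≥ 2, the angle-doubling map d maps the hemisphere D^{n−1} onto the unit sphere S^{n−1} ⊂ ℝ^n, maps the boundary ∂D^{n−1} = {x ∈ S^n : x_n = x_{n+1} = 0} to the single point (0, …, 0, −1) ∈ S^{n−1}, and its restriction to D^{n−1} is 4-Lipschitz. -/
/-- The angle-doubling map `d : ℝ^{n+1} → ℝ^n`,
`d(x_1, …, x_{n+1}) = (2x_n x_1, …, 2x_n x_{n−1}, 2x_n² − 1)`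
(here coordinates `x_1, …, x_{n+1}` correspond to indices `0, …, n`). -/
noncomputable def doubling (n : ℕ) (x : EuclideanSpace ℝ (Fin (n + 1))) :
    EuclideanSpace ℝ (Fin n) := WithLp.toLp 2 fun j =>
  if (j : ℕ) < n - 1 then 2 * x ⟨n - 1, by omega⟩ * x (Fin.castSucc j)
  else 2 * (x ⟨n - 1, by omega⟩) ^ 2 - 1

/-- The hemisphere `D^{n−1} = {x ∈ S^n : x_{n+1} = 0 and x_n ≥ 0}`. -/
def hemisphere (n : ℕ) : Set (EuclideanSpace ℝ (Fin (n + 1))) :=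
  {x | x ∈ Metric.sphere (0 : EuclideanSpace ℝ (Fin (n + 1))) 1 ∧
    x ⟨n, by omega⟩ = 0 ∧ 0 ≤ x ⟨n - 1, by omega⟩}

/-- The point `(0, …, 0, −1) ∈ S^{n−1} ⊂ ℝ^n`. -/
def southPole (n : ℕ) : EuclideanSpace ℝ (Fin n) := WithLp.toLp 2 fun j =>
  if (j : ℕ) = n - 1 then -1 else 0


/-!
Write `P : ℝⁿ⁺¹ → ℝⁿ` for the projection forgetting the last coordinate and `e` for the last
basis vector of `ℝⁿ`. Then `d = D ∘ P` with `D v = 2⟪v, e⟫ v - e`, which for a unit vector `v` is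
the reflection of `e` in the line `ℝ v`: it doubles the angle between `v` and `e`. Hence `D` maps
the closed hemisphere `⟪v, e⟫ ≥ 0` of the unit sphere onto the sphere (a point `y ≠ -e` is the
image of the unit bisector of `y` and `e`) and sends its boundary `⟪v, e⟫ = 0` to `-e`. The
identity `D v - D w = ⟪v + w, e⟫ (v - w) + ⟪v - w, e⟫ (v + w)` shows that `D` is `4`-Lipschitz on
the unit ball, and `P` is `1`-Lipschitz and maps the hemisphere `D^{n-1}` onto the hemisphere
`⟪v, e⟫ ≥ 0`.
-/

open Metric Set
open scoped RealInnerProductSpace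

section AngleDoubling

variable {E : Type*} [NormedAddCommGroup E] [InnerProductSpace ℝ E]

def angleDoubling (e v : E) : E := (2 * ⟪v, e⟫) • v - e

lemma angleDoubling_of_inner_eq_zero {e v : E} (h : ⟪v, e⟫ = 0) : angleDoubling e v = -e := by
  simp [angleDoubling, h]

lemma norm_angleDoubling {e v : E} (he : ‖e‖ = 1) (hv : ‖v‖ = 1) : ‖angleDoubling e v‖ = 1 := by
  have hsq : ‖angleDoubling e v‖ ^ 2 = 1 := by
    rw [angleDoubling, norm_sub_sq_real, norm_smul, inner_smul_left, he, hv, Real.norm_eq_abs]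
    simp only [conj_trivial, mul_pow, sq_abs]
    ring
  exact (pow_eq_one_iff_of_nonneg (norm_nonneg _) two_ne_zero).mp hsq

lemma angleDoubling_sub_angleDoubling (e v w : E) :
    angleDoubling e v - angleDoubling e w = ⟪v + w, e⟫ • (v - w) + ⟪v - w, e⟫ • (v + w) := by
  simp only [angleDoubling, inner_add_left, inner_sub_left]
  module

lemma lipschitzOnWith_angleDoubling {e : E} (he : ‖e‖ ≤ 1) :
    LipschitzOnWith 4 (angleDoubling e) (closedBall 0 1) := by
  have inner_le (z : E) : |⟪z, e⟫| ≤ ‖z‖ :=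
    (abs_real_inner_le_norm z e).trans (mul_le_of_le_one_right (norm_nonneg z) he)
  refine LipschitzOnWith.of_dist_le_mul fun v hv w hw => ?_
  rw [mem_closedBall_zero_iff] at hv hw
  have hvw : ‖v + w‖ ≤ 2 := (norm_add_le v w).trans (by linarith)
  rw [dist_eq_norm, dist_eq_norm, angleDoubling_sub_angleDoubling]
  calc ‖⟪v + w, e⟫ • (v - w) + ⟪v - w, e⟫ • (v + w)‖
      ≤ |⟪v + w, e⟫| * ‖v - w‖ + |⟪v - w, e⟫| * ‖v + w‖ := by
        refine (norm_add_le _ _).trans_eq ?_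
        rw [norm_smul, norm_smul, Real.norm_eq_abs, Real.norm_eq_abs]
    _ ≤ ‖v + w‖ * ‖v - w‖ + ‖v - w‖ * ‖v + w‖ := by
        gcongr
        · exact inner_le _
        · exact inner_le _
    _ ≤ 4 * ‖v - w‖ := by nlinarith [norm_nonneg (v - w)]
    _ = _ := by norm_num

lemma inner_normalized_add_eq_half_norm {e y : E} (he : ‖e‖ = 1) (hy : ‖y‖ = 1) :
    ⟪‖y + e‖⁻¹ • (y + e), e⟫ = ‖y + e‖ / 2 := by
  have hsq : ‖y + e‖ ^ 2 = 2 * ⟪y + e, e⟫ := by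
    rw [norm_add_sq_real, inner_add_left, real_inner_self_eq_norm_sq, he, hy]
    ring
  rcases eq_or_ne ‖y + e‖ 0 with h | h
  · simp [h]
  · rw [real_inner_smul_left]
    field_simp
    linarith

theorem angleDoubling_image_hemisphere {e u : E} (he : ‖e‖ = 1) (hu : ‖u‖ = 1)
    (hue : ⟪u, e⟫ = 0) :
    angleDoubling e '' (sphere 0 1 ∩ {v | 0 ≤ ⟪v, e⟫}) = sphere 0 1 := by
  refine Subset.antisymm ?_ fun y hy => ?_
  · rintro _ ⟨v, ⟨hv, -⟩, rfl⟩
    rw [mem_sphere_zero_iff_norm] at hv ⊢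
    exact norm_angleDoubling he hv
  rw [mem_sphere_zero_iff_norm] at hy
  rcases eq_or_ne (y + e) 0 with hye | hye
  · refine ⟨u, ⟨by simpa using hu, by simp [hue]⟩, ?_⟩
    rw [angleDoubling_of_inner_eq_zero hue, ← add_eq_zero_iff_eq_neg.mp hye]
  · have hinner := inner_normalized_add_eq_half_norm he hy
    have hpos : 0 < ‖y + e‖ := norm_pos_iff.mpr hye
    refine ⟨‖y + e‖⁻¹ • (y + e), ⟨?_, ?_⟩, ?_⟩
    · exact mem_sphere_zero_iff_norm.mpr (norm_smul_inv_norm hye)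
    · change 0 ≤ ⟪_, e⟫
      rw [hinner]; positivity
    · rw [angleDoubling, hinner, smul_smul, mul_div_cancel₀ _ two_ne_zero,
        mul_inv_cancel₀ hpos.ne', one_smul, add_sub_cancel_right]

end AngleDoubling

section Coordinates

def dropLast (n : ℕ) : EuclideanSpace ℝ (Fin (n + 1)) →ₗ[ℝ] EuclideanSpace ℝ (Fin n) where
  toFun x := WithLp.toLp 2 fun j => x j.castSucc
  map_add' _ _ := rfl
  map_smul' _ _ := rfl

@[simp]
lemma dropLast_apply {n : ℕ} (x : EuclideanSpace ℝ (Fin (n + 1))) (j : Fin n) :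
    dropLast n x j = x j.castSucc := rfl

lemma norm_sq_eq_norm_dropLast_sq_add {n : ℕ} (x : EuclideanSpace ℝ (Fin (n + 1))) :
    ‖x‖ ^ 2 = ‖dropLast n x‖ ^ 2 + x (Fin.last n) ^ 2 := by
  simp only [EuclideanSpace.real_norm_sq_eq, Fin.sum_univ_castSucc, dropLast_apply]

lemma norm_dropLast_of_last_eq_zero {n : ℕ} {x : EuclideanSpace ℝ (Fin (n + 1))}
    (h : x (Fin.last n) = 0) : ‖dropLast n x‖ = ‖x‖ := by
  rw [← sq_eq_sq₀ (norm_nonneg _) (norm_nonneg _), norm_sq_eq_norm_dropLast_sq_add x, h]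
  ring

lemma lipschitzWith_dropLast (n : ℕ) : LipschitzWith 1 (dropLast n) := by
  refine AddMonoidHomClass.lipschitz_of_bound_nnnorm (dropLast n) 1 fun x => ?_
  rw [one_mul, ← NNReal.coe_le_coe, coe_nnnorm, coe_nnnorm,
    ← sq_le_sq₀ (norm_nonneg _) (norm_nonneg _), norm_sq_eq_norm_dropLast_sq_add x]
  exact le_add_of_nonneg_right (sq_nonneg _)

lemma inner_dropLast_single_last {m : ℕ} (x : EuclideanSpace ℝ (Fin (m + 2))) :
    ⟪dropLast (m + 1) x, EuclideanSpace.single (Fin.last m) 1⟫ = x (Fin.last m).castSucc := by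
  simp [EuclideanSpace.inner_single_right]

lemma doubling_eq_angleDoubling_dropLast (m : ℕ) (x : EuclideanSpace ℝ (Fin (m + 2))) :
    doubling (m + 1) x =
      angleDoubling (EuclideanSpace.single (Fin.last m) 1) (dropLast (m + 1) x) := by
  have hlast : x ⟨m, by omega⟩ = x (Fin.last m).castSucc := rfl
  ext j
  rcases Fin.eq_castSucc_or_eq_last j with ⟨i, rfl⟩ | rfl
  · simp [doubling, angleDoubling, inner_dropLast_single_last, hlast, Fin.castSucc_ne_last]
  · simp [doubling, angleDoubling, inner_dropLast_single_last, hlast]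
    ring

lemma dropLast_image_hemisphere (m : ℕ) :
    dropLast (m + 1) '' hemisphere (m + 1) =
      sphere 0 1 ∩ {v | 0 ≤ ⟪v, EuclideanSpace.single (Fin.last m) 1⟫} := by
  ext v
  constructor
  · rintro ⟨x, ⟨hx, hlast, hnonneg⟩, rfl⟩
    refine ⟨?_, ?_⟩
    · rw [mem_sphere_zero_iff_norm] at hx ⊢
      rwa [norm_dropLast_of_last_eq_zero hlast]
    · change 0 ≤ ⟪_, _⟫
      rwa [inner_dropLast_single_last]
  · rintro ⟨hv, hnonneg⟩
    let x : EuclideanSpace ℝ (Fin (m + 2)) := WithLp.toLp 2 (Fin.snoc (α := fun _ => ℝ) v.ofLp 0)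
    have hlast : x (Fin.last (m + 1)) = 0 := by simp [x]
    have hdrop : dropLast (m + 1) x = v := by ext j; simp [x]
    refine ⟨x, ⟨?_, hlast, ?_⟩, hdrop⟩
    · rw [mem_sphere_zero_iff_norm] at hv ⊢
      rwa [← norm_dropLast_of_last_eq_zero hlast, hdrop]
    · change 0 ≤ x (Fin.last m).castSucc
      rwa [← inner_dropLast_single_last, hdrop]

lemma southPole_eq_neg_single (m : ℕ) :
    southPole (m + 1) = -EuclideanSpace.single (Fin.last m) 1 := by
  ext j
  rcases Fin.eq_castSucc_or_eq_last j with ⟨i, rfl⟩ | rfl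
  · simp [southPole, Fin.castSucc_ne_last, i.isLt.ne]
  · simp [southPole]

end Coordinates

theorem doubling_maps_hemisphere_onto_sphere (n : ℕ) (hn : 2 ≤ n) :
    doubling n '' hemisphere n = Metric.sphere (0 : EuclideanSpace ℝ (Fin n)) 1 ∧
    (∀ x ∈ Metric.sphere (0 : EuclideanSpace ℝ (Fin (n + 1))) 1,
      x ⟨n - 1, by omega⟩ = 0 → x ⟨n, by omega⟩ = 0 → doubling n x = southPole n) ∧
    LipschitzOnWith 4 (doubling n) (hemisphere n) := by
  obtain ⟨m, rfl⟩ : ∃ m, n = m + 2 := ⟨n - 2, by omega⟩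
  set e : EuclideanSpace ℝ (Fin (m + 2)) := EuclideanSpace.single (Fin.last (m + 1)) 1
  have hd : doubling (m + 2) = angleDoubling e ∘ dropLast (m + 2) :=
    funext (doubling_eq_angleDoubling_dropLast (m + 1))
  have himage : doubling (m + 2) '' hemisphere (m + 2) = sphere 0 1 := by
    rw [hd, image_comp, dropLast_image_hemisphere]
    exact angleDoubling_image_hemisphere (u := EuclideanSpace.single 0 1) (by simp [e]) (by simp)
      (by simp [e, EuclideanSpace.inner_single_right, Fin.ext_iff])
  refine ⟨himage, fun x _ hx _ => ?_, ?_⟩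
  · rw [hd, Function.comp_apply, southPole_eq_neg_single]
    exact angleDoubling_of_inner_eq_zero ((inner_dropLast_single_last x).trans hx)
  · rw [hd, ← mul_one 4]
    refine (lipschitzOnWith_angleDoubling (by simp [e])).comp
      (lipschitzWith_dropLast _).lipschitzOnWith fun x hx => ?_
    have hmem := mem_image_of_mem (dropLast (m + 2)) hx
    rw [dropLast_image_hemisphere] at hmem
    exact sphere_subset_closedBall hmem.1
end

section
/- For every n ≥ 1 there exists a surjective map from the unit sphere S^n ⊂ ℝ^{n+1} onto the unit circle S^1 ⊂ ℝ² that is 4^{n−1}-Lipschitz (4^{n−1}-contracting). -/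
/-!
For `n = 1` the identity works. For `n ≥ 2` take `x ↦ e^{π i x₀}`: it is `π`-Lipschitz because
`t ↦ e^{it}` and the coordinate `x₀` are `1`-Lipschitz, and it is onto because `x₀` takes every
value of `[-1, 1]` on the connected sphere `Sⁿ`. Finally `π ≤ 4 ≤ 4ⁿ⁻¹`.
-/

open Complex Metric Set
open scoped Real

theorem Complex.dist_exp_ofReal_mul_I_le (s t : ℝ) :
    dist (exp (s * I)) (exp (t * I)) ≤ dist s t := by
  have hfactor : exp (s * I) - exp (t * I) = exp (t * I) * (exp (I * (s - t : ℝ)) - 1) := by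
    rw [mul_sub, mul_one, ← Complex.exp_add]
    push_cast
    ring_nf
  rw [dist_eq_norm, hfactor, norm_mul, norm_exp_ofReal_mul_I, one_mul, Real.dist_eq]
  exact Real.norm_exp_I_mul_ofReal_sub_one_le

theorem Complex.surjOn_exp_pi_mul_I_Icc :
    SurjOn (fun t : ℝ => exp ((π * t : ℝ) * I)) (Icc (-1) 1) (sphere 0 1) := by
  intro z hz
  have hnorm : ‖z‖ = 1 := mem_sphere_zero_iff_norm.mp hz
  refine ⟨z.arg / π, ?_, ?_⟩
  · rw [mem_Icc, le_div_iff₀ Real.pi_pos, div_le_iff₀ Real.pi_pos, neg_one_mul, one_mul]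
    exact ⟨neg_pi_lt_arg z |>.le, arg_le_pi z⟩
  · simpa [mul_div_cancel₀ _ Real.pi_pos.ne', hnorm] using norm_mul_exp_arg_mul_I z

theorem EuclideanSpace.surjOn_apply_sphere {ι : Type*} [Fintype ι] (hι : 1 < Fintype.card ι)
    (i : ι) : SurjOn (fun x : EuclideanSpace ℝ ι => x i) (sphere 0 1) (Icc (-1) 1) := by
  classical
  have hrank : 1 < Module.rank ℝ (EuclideanSpace ℝ ι) := by
    rw [← Module.finrank_eq_rank, finrank_euclideanSpace]
    exact_mod_cast hι
  have hconn : IsPreconnected ((fun x : EuclideanSpace ℝ ι => x i) '' sphere 0 1) :=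
    (isPreconnected_sphere hrank 0 1).image _ (PiLp.continuous_apply 2 _ i).continuousOn
  refine hconn.Icc_subset ⟨single i (-1), ?_, by simp⟩ ⟨single i 1, ?_, by simp⟩ <;> simp

noncomputable def wrapCoord {ι : Type*} [Fintype ι] (i : ι) (x : EuclideanSpace ℝ ι) :
    EuclideanSpace ℝ (Fin 2) :=
  orthonormalBasisOneI.repr (exp ((π * x i : ℝ) * I))

section wrapCoord

variable {ι : Type*} [Fintype ι] (i : ι)

theorem lipschitzWith_wrapCoord : LipschitzWith NNReal.pi (wrapCoord i) := by
  refine LipschitzWith.of_dist_le_mul fun x y => ?_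
  calc dist (wrapCoord i x) (wrapCoord i y)
      ≤ dist (π * x i) (π * y i) := by
        rw [wrapCoord, wrapCoord, LinearIsometryEquiv.dist_map]
        exact dist_exp_ofReal_mul_I_le _ _
    _ = π * dist (x i) (y i) := by
        rw [Real.dist_eq, Real.dist_eq, ← mul_sub, abs_mul, abs_of_pos Real.pi_pos]
    _ ≤ NNReal.pi * dist x y := by
        rw [NNReal.coe_real_pi]; gcongr; exact PiLp.dist_apply_le x y i

theorem mapsTo_wrapCoord (s : Set (EuclideanSpace ℝ ι)) :
    MapsTo (wrapCoord i) s (sphere 0 1) := fun x _ => by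
  rw [mem_sphere_zero_iff_norm, wrapCoord, LinearIsometryEquiv.norm_map, norm_exp_ofReal_mul_I]

theorem surjOn_wrapCoord_sphere (hι : 1 < Fintype.card ι) :
    SurjOn (wrapCoord i) (sphere 0 1) (sphere 0 1) := by
  have hrepr : SurjOn orthonormalBasisOneI.repr (sphere 0 1) (sphere 0 1) := by
    rw [SurjOn, LinearIsometryEquiv.image_sphere, map_zero]
  exact hrepr.comp (surjOn_exp_pi_mul_I_Icc.comp (EuclideanSpace.surjOn_apply_sphere hι i))

end wrapCoord

theorem exists_contracting_surjection_sphere_to_circle (n : ℕ) (hn : 1 ≤ n) :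
    ∃ f : Metric.sphere (0 : EuclideanSpace ℝ (Fin (n + 1))) 1 →
        Metric.sphere (0 : EuclideanSpace ℝ (Fin 2)) 1,
      Function.Surjective f ∧ LipschitzWith (4 ^ (n - 1)) f := by
  obtain _ | _ | m := n
  · omega
  · exact ⟨id, Function.surjective_id, by simpa using LipschitzWith.id⟩
  · have hmaps := mapsTo_wrapCoord (0 : Fin (m + 3)) (sphere 0 1)
    refine ⟨hmaps.restrict, hmaps.restrict_surjective_iff.mpr
      (surjOn_wrapCoord_sphere 0 (by simp)), ?_⟩
    have hpi : NNReal.pi ≤ 4 ^ (m + 2 - 1) := by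
      rw [← NNReal.coe_le_coe, NNReal.coe_pow, NNReal.coe_real_pi]
      exact Real.pi_le_four.trans (le_self_pow₀ (by norm_num) (by omega))
    exact hmaps.lipschitzOnWith_iff_restrict.mp
      ((lipschitzWith_wrapCoord 0).weaken hpi).lipschitzOnWith
end

section
/- Let L > 0 and c > 0, and let f : ℝ → ℝ be twice continuously differentiable with f(x) > 0 and f''(x) ≤ −c·f(x) for every x in the closed interval [0, L]. Then c·L² ≤ π². -/
/-!
Sturm comparison with the sine: put `s = √c` and suppose `π / s < L`. The Wronskian
`W = f · (sin (s·))' - f' · sin (s·)` has derivative `-sin (s x) · (f'' + s² f) ≥ 0` on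
`[0, π / s]`, so `s f 0 = W 0 ≤ W (π / s) = -s f (π / s)`, contradicting the positivity of `f`.
-/

open Real Set

section SineComparison

variable {f f' f'' : ℝ → ℝ} {s : ℝ}

theorem hasDerivAt_sine_wronskian {x : ℝ} (hf : HasDerivAt f (f' x) x)
    (hf' : HasDerivAt f' (f'' x) x) :
    HasDerivAt (fun y => f y * (s * cos (s * y)) - f' y * sin (s * y))
      (-sin (s * x) * (f'' x + s ^ 2 * f x)) x := by
  have hlin : HasDerivAt (fun y => s * y) s x := by
    simpa using (hasDerivAt_id x).const_mul s
  have hsin := (hasDerivAt_sin (s * x)).comp x hlin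
  have hcos := ((hasDerivAt_cos (s * x)).comp x hlin).const_mul s
  exact ((hf.mul hcos).sub (hf'.mul hsin)).congr_deriv (by simp only [Function.comp_apply]; ring)

theorem add_nonpos_of_deriv_deriv_le_neg_sq_mul (hs : 0 < s)
    (hf : ∀ x ∈ Icc 0 (π / s), HasDerivAt f (f' x) x)
    (hf' : ∀ x ∈ Icc 0 (π / s), HasDerivAt f' (f'' x) x)
    (hineq : ∀ x ∈ Ioo 0 (π / s), f'' x ≤ -s ^ 2 * f x) :
    f 0 + f (π / s) ≤ 0 := by
  set W := fun y => f y * (s * cos (s * y)) - f' y * sin (s * y)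
  have hW : ∀ x ∈ Icc 0 (π / s), HasDerivAt W (-sin (s * x) * (f'' x + s ^ 2 * f x)) x :=
    fun x hx => hasDerivAt_sine_wronskian (hf x hx) (hf' x hx)
  have hmono : MonotoneOn W (Icc 0 (π / s)) := by
    refine monotoneOn_of_hasDerivWithinAt_nonneg (convex_Icc 0 (π / s))
      (fun x hx => (hW x hx).continuousAt.continuousWithinAt)
      (fun x hx => (hW x (interior_subset hx)).hasDerivWithinAt) fun x hx => ?_
    rw [interior_Icc] at hx
    have hsin : 0 ≤ sin (s * x) :=
      sin_nonneg_of_nonneg_of_le_pi (mul_nonneg hs.le hx.1.le) ((le_div_iff₀' hs).1 hx.2.le)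
    exact mul_nonneg_of_nonpos_of_nonpos (neg_nonpos.2 hsin) (by linarith [hineq x hx])
  have hπs : 0 ≤ π / s := by positivity
  have hle := hmono (left_mem_Icc.2 hπs) (right_mem_Icc.2 hπs) hπs
  have hsπ : s * (π / s) = π := mul_div_cancel₀ π hs.ne'
  simp only [W, mul_zero, cos_zero, sin_zero, hsπ, cos_pi, sin_pi] at hle
  nlinarith

end SineComparison

theorem log_concavity_length_bound (L c : ℝ) (hL : 0 < L) (hc : 0 < c)
    (f : ℝ → ℝ) (hf : ContDiff ℝ 2 f)
    (hpos : ∀ x ∈ Set.Icc (0 : ℝ) L, 0 < f x)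
    (hineq : ∀ x ∈ Set.Icc (0 : ℝ) L, deriv (deriv f) x ≤ -c * f x) :
    c * L ^ 2 ≤ Real.pi ^ 2 := by
  by_contra! hlong
  set s := √c
  have hs : 0 < s := sqrt_pos.2 hc
  have hsq : s ^ 2 = c := sq_sqrt hc.le
  have hπsL : π / s < L := by
    rw [div_lt_iff₀ hs]
    exact lt_of_pow_lt_pow_left₀ 2 (by positivity) (by nlinarith)
  have hsub : Icc 0 (π / s) ⊆ Icc 0 L := Icc_subset_Icc_right hπsL.le
  have hsum := add_nonpos_of_deriv_deriv_le_neg_sq_mul hs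
    (fun x _ => (hf.differentiable two_ne_zero x).hasDerivAt)
    (fun x _ => (hf.differentiable_deriv_two x).hasDerivAt)
    (fun x hx => hsq ▸ hineq x (hsub (Ioo_subset_Icc_self hx)))
  have hπs : 0 ≤ π / s := by positivity
  linarith [hpos 0 ⟨le_rfl, hL.le⟩, hpos (π / s) (hsub (right_mem_Icc.2 hπs))]
end

section
/- Let L > 0 and κ > 0, and let ψ : ℝ³ → ℝ be a C² function that is positive everywhere, 1-periodic in its second and third variables, and satisfies −8·(∂²_t ψ + ∂²_y ψ + ∂²_z ψ) ≥ κ·ψ at every point whose first coordinate lies in [0, L]. Then κ ≤ 8π²/L². -/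
/-!
Average `ψ` over the torus factor: `G t = ∫_{[0,1]²} ψ (t, ·)` is positive, and by periodicity the
second derivatives in the torus directions integrate to zero, so `G'' ≤ -(κ / 8) G` on `[0, L]`.
Sturm comparison with `sin (√(κ / 8) t)` shows that a positive solution of this inequality cannot
live on an interval of length at least `π / √(κ / 8)`, whence `κ ≤ 8 π² / L²`.
-/

open MeasureTheory Real Set

theorem mul_lt_pi_of_hasDerivAt_of_le_neg_sq_mul {F F' F'' : ℝ → ℝ} {m T : ℝ} (hm : 0 < m)
    (hF : ∀ t, HasDerivAt F (F' t) t) (hF' : ∀ t, HasDerivAt F' (F'' t) t)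
    (hpos : ∀ t ∈ Icc 0 T, 0 < F t) (hF'' : ∀ t ∈ Icc 0 T, F'' t ≤ -m ^ 2 * F t) :
    m * T < π := by
  by_contra! hT
  have hπm : π / m ≤ T := (div_le_iff₀' hm).2 hT
  have hmπ : m * (π / m) = π := mul_div_cancel₀ π hm.ne'
  -- the Wronskian of `F` and `sin (m t)`, which is antitone as long as `F'' ≤ -m ^ 2 * F`
  set W : ℝ → ℝ := fun t => F' t * sin (m * t) - m * F t * cos (m * t)
  have hW : ∀ t, HasDerivAt W ((F'' t + m ^ 2 * F t) * sin (m * t)) t := by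
    intro t
    have hmt : HasDerivAt (fun t => m * t) m t := by simpa using (hasDerivAt_id t).const_mul m
    refine (((hF' t).mul hmt.sin).sub (((hF t).const_mul m).mul hmt.cos)).congr_deriv ?_
    ring
  have hWanti : AntitoneOn W (Icc 0 (π / m)) := by
    refine antitoneOn_of_hasDerivWithinAt_nonpos (convex_Icc _ _)
      (fun t _ => (hW t).continuousAt.continuousWithinAt) (fun t _ => (hW t).hasDerivWithinAt) ?_
    intro t ht
    rw [interior_Icc] at ht
    obtain ⟨ht0, htπ⟩ := ht
    refine mul_nonpos_of_nonpos_of_nonneg ?_ (sin_nonneg_of_nonneg_of_le_pi (by positivity) ?_)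
    · linarith [hF'' t ⟨ht0.le, htπ.le.trans hπm⟩]
    · calc m * t ≤ m * (π / m) := by gcongr
        _ = π := hmπ
  have hπm0 : 0 ≤ π / m := by positivity
  have hWle := hWanti (left_mem_Icc.2 hπm0) (right_mem_Icc.2 hπm0) hπm0
  simp only [W, mul_zero, sin_zero, cos_zero, hmπ, sin_pi, cos_pi] at hWle
  nlinarith [mul_pos hm (hpos 0 ⟨le_rfl, hπm0.trans hπm⟩), mul_pos hm (hpos (π / m) ⟨hπm0, hπm⟩)]

section SecondDerivative

variable {E : Type*} [NormedAddCommGroup E] [NormedSpace ℝ E] {f : E → ℝ} {γ : ℝ → E} {v : E}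

theorem hasDerivAt_fderiv_apply_comp {s : ℝ} (hf : ContDiff ℝ 2 f) (hγ : HasDerivAt γ v s) :
    HasDerivAt (fun s => fderiv ℝ f (γ s) v) (fderiv ℝ (fderiv ℝ f) (γ s) v v) s := by
  have hf' : Differentiable ℝ (fderiv ℝ f) :=
    (hf.fderiv_right (m := 1) (by norm_num)).differentiable one_ne_zero
  have := ((hf' (γ s)).hasFDerivAt.clm_apply (hasFDerivAt_const v (γ s))).comp_hasDerivAt s hγ
  simp only [ContinuousLinearMap.comp_zero, zero_add, ContinuousLinearMap.flip_apply] at this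
  exact this

theorem deriv_deriv_comp_eq_fderiv_fderiv (hf : ContDiff ℝ 2 f) (hγ : ∀ s, HasDerivAt γ v s)
    (s : ℝ) : deriv (deriv fun s => f (γ s)) s = fderiv ℝ (fderiv ℝ f) (γ s) v v := by
  have hderiv : (deriv fun s => f (γ s)) = fun s => fderiv ℝ f (γ s) v :=
    funext fun s =>
      ((hf.differentiable (by norm_num) (γ s)).hasFDerivAt.comp_hasDerivAt s (hγ s)).deriv
  rw [hderiv, (hasDerivAt_fderiv_apply_comp hf (hγ s)).deriv]

theorem continuous_fderiv_fderiv_apply (hf : ContDiff ℝ 2 f) (v w : E) :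
    Continuous fun p => fderiv ℝ (fderiv ℝ f) p v w :=
  ((hf.fderiv_right (m := 1) (by norm_num)).continuous_fderiv one_ne_zero).clm_apply
    continuous_const |>.clm_apply continuous_const

theorem fderiv_add_eq_of_forall_add_eq {w : E} (hf : ∀ p, f (p + w) = f p) (p : E) :
    fderiv ℝ f (p + w) = fderiv ℝ f p := by
  rw [← fderiv_comp_add_right, funext hf]

end SecondDerivative

section ParametricIntegral

variable {X : Type*} [TopologicalSpace X] [T2Space X] [MeasurableSpace X] [OpensMeasurableSpace X]
  {μ : Measure X} [IsFiniteMeasureOnCompacts μ] {K : Set X}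

theorem hasDerivAt_setIntegral_of_continuous (hK : IsCompact K) {f g : ℝ × X → ℝ}
    (hf : Continuous f) (hg : Continuous g)
    (hd : ∀ t q, HasDerivAt (fun s => f (s, q)) (g (t, q)) t) (t : ℝ) :
    HasDerivAt (fun s => ∫ q in K, f (s, q) ∂μ) (∫ q in K, g (t, q) ∂μ) t := by
  obtain ⟨C, hC⟩ :=
    ((isCompact_closedBall t 1).prod hK).exists_bound_of_continuousOn hg.continuousOn
  refine (hasDerivAt_integral_of_dominated_loc_of_deriv_le (bound := fun _ => C)
    (Metric.ball_mem_nhds t one_pos)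
    (.of_forall fun s => (hf.comp (.prodMk_right s)).aestronglyMeasurable)
    ((hf.comp (.prodMk_right t)).continuousOn.integrableOn_compact hK)
    (hg.comp (.prodMk_right t)).aestronglyMeasurable
    ?_ (integrableOn_const hK.measure_lt_top.ne) (.of_forall fun q s _ => hd s q)).2
  filter_upwards [ae_restrict_mem hK.measurableSet] with q hq s hs
  exact hC (s, q) ⟨Metric.ball_subset_closedBall hs, hq⟩

theorem setIntegral_pos_of_continuous_of_pos (hK : IsCompact K) (hμK : μ K ≠ 0) {f : X → ℝ}
    (hf : Continuous f) (hpos : ∀ x, 0 < f x) : 0 < ∫ x in K, f x ∂μ := by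
  rw [setIntegral_pos_iff_support_of_nonneg_ae (.of_forall fun x => (hpos x).le)
    (hf.continuousOn.integrableOn_compact hK),
    eq_univ_of_forall fun x => Function.mem_support.2 (hpos x).ne', univ_inter]
  exact pos_iff_ne_zero.2 hμK

end ParametricIntegral

def unitSquare : Set (ℝ × ℝ) := Icc 0 1 ×ˢ Icc 0 1

theorem isCompact_unitSquare : IsCompact unitSquare := isCompact_Icc.prod isCompact_Icc

theorem volume_unitSquare : volume unitSquare = 1 := by
  rw [unitSquare, Measure.volume_eq_prod, Measure.prod_prod, Real.volume_Icc]
  norm_num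

theorem setIntegral_Icc_zero_one_eq_zero_of_hasDerivAt {g g' : ℝ → ℝ}
    (hd : ∀ x, HasDerivAt g (g' x) x) (hg' : Continuous g') (hg : g 1 = g 0) :
    ∫ x in Icc 0 1, g' x = 0 := by
  rw [integral_Icc_eq_integral_Ioc, ← intervalIntegral.integral_of_le zero_le_one,
    intervalIntegral.integral_eq_sub_of_hasDerivAt (fun x _ => hd x) (hg'.intervalIntegrable 0 1),
    hg, sub_self]

theorem setIntegral_unitSquare_eq_zero_of_hasDerivAt_snd {g g' : ℝ × ℝ → ℝ} (hg' : Continuous g')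
    (hd : ∀ y z, HasDerivAt (fun s => g (y, s)) (g' (y, z)) z) (hg : ∀ y, g (y, 1) = g (y, 0)) :
    ∫ q in unitSquare, g' q = 0 := by
  rw [unitSquare, Measure.volume_eq_prod, setIntegral_prod _
    (hg'.continuousOn.integrableOn_compact isCompact_unitSquare)]
  have hinner (y : ℝ) : ∫ z in Icc 0 1, g' (y, z) = 0 :=
    setIntegral_Icc_zero_one_eq_zero_of_hasDerivAt (hd y) (hg'.comp (.prodMk_right y)) (hg y)
  simp only [hinner, integral_zero]

theorem setIntegral_unitSquare_eq_zero_of_hasDerivAt_fst {g g' : ℝ × ℝ → ℝ} (hg' : Continuous g')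
    (hd : ∀ y z, HasDerivAt (fun s => g (s, z)) (g' (y, z)) y) (hg : ∀ z, g (1, z) = g (0, z)) :
    ∫ q in unitSquare, g' q = 0 := by
  rw [unitSquare, Measure.volume_eq_prod, ← setIntegral_prod_swap]
  exact setIntegral_unitSquare_eq_zero_of_hasDerivAt_snd (g := g ∘ Prod.swap)
    (hg'.comp continuous_swap) (fun z y => hd y z) hg

noncomputable def flatLaplacian (f : ℝ × ℝ × ℝ → ℝ) (p : ℝ × ℝ × ℝ) : ℝ :=
  fderiv ℝ (fderiv ℝ f) p (1, 0, 0) (1, 0, 0) + fderiv ℝ (fderiv ℝ f) p (0, 1, 0) (0, 1, 0) +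
    fderiv ℝ (fderiv ℝ f) p (0, 0, 1) (0, 0, 1)

section FlatLaplacian

variable {f : ℝ × ℝ × ℝ → ℝ}

theorem sum_deriv_deriv_eq_flatLaplacian (hf : ContDiff ℝ 2 f) (t y z : ℝ) :
    deriv (deriv fun s => f (s, y, z)) t + deriv (deriv fun s => f (t, s, z)) y +
      deriv (deriv fun s => f (t, y, s)) z = flatLaplacian f (t, y, z) := by
  rw [flatLaplacian,
    deriv_deriv_comp_eq_fderiv_fderiv hf (γ := fun s => (s, y, z))
      (fun s => (hasDerivAt_id s).prodMk (hasDerivAt_const s (y, z))),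
    deriv_deriv_comp_eq_fderiv_fderiv hf (γ := fun s => (t, s, z))
      (fun s => (hasDerivAt_const s t).prodMk ((hasDerivAt_id s).prodMk (hasDerivAt_const s z))),
    deriv_deriv_comp_eq_fderiv_fderiv hf (γ := fun s => (t, y, s))
      (fun s => (hasDerivAt_const s t).prodMk ((hasDerivAt_const s y).prodMk (hasDerivAt_id s)))]
  rfl

theorem continuous_flatLaplacian (hf : ContDiff ℝ 2 f) : Continuous (flatLaplacian f) :=
  ((continuous_fderiv_fderiv_apply hf _ _).add (continuous_fderiv_fderiv_apply hf _ _)).add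
    (continuous_fderiv_fderiv_apply hf _ _)

theorem setIntegral_unitSquare_flatLaplacian (hf : ContDiff ℝ 2 f)
    (hy : ∀ t y z, f (t, y + 1, z) = f (t, y, z)) (hz : ∀ t y z, f (t, y, z + 1) = f (t, y, z))
    (t : ℝ) :
    ∫ q in unitSquare, flatLaplacian f (t, q) =
      ∫ q in unitSquare, fderiv ℝ (fderiv ℝ f) (t, q) (1, 0, 0) (1, 0, 0) := by
  have hcont (v) : Continuous fun q : ℝ × ℝ => fderiv ℝ (fderiv ℝ f) (t, q) v v :=
    (continuous_fderiv_fderiv_apply hf v v).comp (.prodMk_right t)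
  have hint (v) : IntegrableOn (fun q : ℝ × ℝ => fderiv ℝ (fderiv ℝ f) (t, q) v v) unitSquare :=
    (hcont v).continuousOn.integrableOn_compact isCompact_unitSquare
  have hyper : ∀ p, f (p + (0, 1, 0)) = f p := fun ⟨t, y, z⟩ => by simpa using hy t y z
  have hzper : ∀ p, f (p + (0, 0, 1)) = f p := fun ⟨t, y, z⟩ => by simpa using hz t y z
  have hy0 : ∫ q in unitSquare, fderiv ℝ (fderiv ℝ f) (t, q) (0, 1, 0) (0, 1, 0) = 0 :=
    setIntegral_unitSquare_eq_zero_of_hasDerivAt_fst (g := fun q => fderiv ℝ f (t, q) (0, 1, 0))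
      (hcont _) (fun y z => hasDerivAt_fderiv_apply_comp hf
        ((hasDerivAt_const y t).prodMk ((hasDerivAt_id y).prodMk (hasDerivAt_const y z))))
      fun z => by
        simpa using congrArg (· (0, 1, 0)) (fderiv_add_eq_of_forall_add_eq hyper (t, 0, z))
  have hz0 : ∫ q in unitSquare, fderiv ℝ (fderiv ℝ f) (t, q) (0, 0, 1) (0, 0, 1) = 0 :=
    setIntegral_unitSquare_eq_zero_of_hasDerivAt_snd (g := fun q => fderiv ℝ f (t, q) (0, 0, 1))
      (hcont _) (fun y z => hasDerivAt_fderiv_apply_comp hf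
        ((hasDerivAt_const z t).prodMk ((hasDerivAt_const z y).prodMk (hasDerivAt_id z))))
      fun y => by
        simpa using congrArg (· (0, 0, 1)) (fderiv_add_eq_of_forall_add_eq hzper (t, y, 0))
  simp only [flatLaplacian]
  rw [integral_add, integral_add, hy0, hz0, add_zero, add_zero]
  all_goals first | exact hint _ | exact (hint _).add (hint _)

end FlatLaplacian

theorem scalar_curvature_bound_on_flat_cylinder (L κ : ℝ) (hL : 0 < L) (hκ : 0 < κ)
    (ψ : ℝ × ℝ × ℝ → ℝ) (hψ : ContDiff ℝ 2 ψ) (hpos : ∀ p, 0 < ψ p)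
    (hper : ∀ t y z : ℝ, ψ (t, y + 1, z) = ψ (t, y, z) ∧ ψ (t, y, z + 1) = ψ (t, y, z))
    (hineq : ∀ t ∈ Set.Icc (0 : ℝ) L, ∀ y z : ℝ,
      κ * ψ (t, y, z) ≤
        -8 * (deriv (deriv fun s => ψ (s, y, z)) t +
              deriv (deriv fun s => ψ (t, s, z)) y +
              deriv (deriv fun s => ψ (t, y, s)) z)) :
    κ ≤ 8 * Real.pi ^ 2 / L ^ 2 := by
  set e₁ : ℝ × ℝ × ℝ := (1, 0, 0)
  set G := fun t => ∫ q in unitSquare, ψ (t, q)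
  set G' := fun t => ∫ q in unitSquare, fderiv ℝ ψ (t, q) e₁
  set G'' := fun t => ∫ q in unitSquare, fderiv ℝ (fderiv ℝ ψ) (t, q) e₁ e₁
  have hline (q : ℝ × ℝ) (s : ℝ) : HasDerivAt (fun s => (s, q)) e₁ s :=
    (hasDerivAt_id s).prodMk (hasDerivAt_const s q)
  have hG (t) : HasDerivAt G (G' t) t :=
    hasDerivAt_setIntegral_of_continuous isCompact_unitSquare hψ.continuous
      ((hψ.continuous_fderiv two_ne_zero).clm_apply continuous_const)
      (fun t q => (hψ.differentiable two_ne_zero (t, q)).hasFDerivAt.comp_hasDerivAt t (hline q t))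
      t
  have hG' (t) : HasDerivAt G' (G'' t) t :=
    hasDerivAt_setIntegral_of_continuous isCompact_unitSquare
      ((hψ.continuous_fderiv two_ne_zero).clm_apply continuous_const)
      (continuous_fderiv_fderiv_apply hψ e₁ e₁)
      (fun t q => hasDerivAt_fderiv_apply_comp hψ (hline q t)) t
  have hGpos (t) : 0 < G t :=
    setIntegral_pos_of_continuous_of_pos isCompact_unitSquare (by simp [volume_unitSquare])
      (hψ.continuous.comp (.prodMk_right t)) fun q => hpos _
  have hGineq (t) (ht : t ∈ Icc 0 L) : G'' t ≤ -(κ / 8) * G t := by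
    have hint {h : ℝ × ℝ × ℝ → ℝ} (hh : Continuous h) :
        IntegrableOn (fun q => h (t, q)) unitSquare :=
      (hh.comp (.prodMk_right t)).continuousOn.integrableOn_compact isCompact_unitSquare
    calc G'' t = ∫ q in unitSquare, flatLaplacian ψ (t, q) :=
          (setIntegral_unitSquare_flatLaplacian hψ (fun t y z => (hper t y z).1)
            (fun t y z => (hper t y z).2) t).symm
      _ ≤ ∫ q in unitSquare, -(κ / 8) * ψ (t, q) := by
          refine setIntegral_mono (hint (continuous_flatLaplacian hψ))
            (hint (continuous_const.mul hψ.continuous)) fun q => ?_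
          have := hineq t ht q.1 q.2
          rw [sum_deriv_deriv_eq_flatLaplacian hψ] at this
          linarith
      _ = -(κ / 8) * G t := integral_const_mul _ _
  have hm : √(κ / 8) ^ 2 = κ / 8 := sq_sqrt (by positivity)
  have hmL := mul_lt_pi_of_hasDerivAt_of_le_neg_sq_mul (sqrt_pos.2 (by positivity)) hG hG'
    (fun t _ => hGpos t) (fun t ht => hm ▸ hGineq t ht)
  rw [le_div_iff₀ (by positivity)]
  nlinarith [mul_self_lt_mul_self (by positivity) hmL]
end

section
/- Let a > 0 and K > 0, and let f : ℝ → ℂ be a map whose restriction to [0, a] is K-Lipschitz and whose image f([0, a]) is the entire unit circle {z ∈ ℂ : |z| = 1}. Then K·a ≥ 2π. -/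
/-!
Sample `f` at the `n + 1` equally spaced points `i * a / n`. Consecutive samples are at chord
distance at most `r = K a / n`, and for unit complex numbers the angle is at most
`φ(r) = r + r ^ 3 / 3` (chord `= 2 sin (angle / 2)`), so summing the principal arguments of
successive quotients lifts the samples to reals `θ 0, …, θ n` spread over an interval of
length at most `n φ(r)`. Every point of the circle lies within angle `φ(r)` of a sample, which
forces that interval to have length at least `2π - 2 φ(r)`.
Hence `2π ≤ (n + 2) φ(K a / n) → K a`.
-/

open Real Complex InnerProductGeometry Set Filter Topology

namespace Complex

variable {x y : ℂ}

lemma norm_sub_eq_two_mul_sin_half_angle (hx : ‖x‖ = 1) (hy : ‖y‖ = 1) :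
    ‖x - y‖ = 2 * Real.sin (angle x y / 2) := by
  have hsin : 0 ≤ Real.sin (angle x y / 2) := Real.sin_nonneg_of_nonneg_of_le_pi
    (by linarith [angle_nonneg x y]) (by linarith [angle_le_pi x y, Real.pi_pos])
  refine (sq_eq_sq₀ (norm_nonneg _) (by positivity)).1 ?_
  have hcos := Real.cos_two_mul' (angle x y / 2)
  rw [mul_div_cancel₀ _ two_ne_zero] at hcos
  have hlaw := norm_sub_sq_eq_norm_sq_add_norm_sq_sub_two_mul_norm_mul_norm_mul_cos_angle x y
  rw [hx, hy] at hlaw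
  linear_combination hlaw - 2 * hcos - 2 * Real.sin_sq_add_cos_sq (angle x y / 2)

lemma angle_le_norm_sub_add_cube (hx : ‖x‖ = 1) (hy : ‖y‖ = 1) :
    angle x y ≤ ‖x - y‖ + ‖x - y‖ ^ 3 / 3 := by
  set α := angle x y
  have hα : 0 ≤ α := angle_nonneg x y
  have hchord : α - α ^ 3 / 24 ≤ ‖x - y‖ := by
    rw [norm_sub_eq_two_mul_sin_half_angle hx hy]
    linarith [Real.sin_ge_sub_cube (x := α / 2) (by positivity)]
  have hjordan : α ≤ 2 * ‖x - y‖ :=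
    (angle_le_mul_norm_sub hx hy).trans (by gcongr; linarith [Real.pi_le_four])
  have hcube : α ^ 3 ≤ (2 * ‖x - y‖) ^ 3 := by gcongr
  linarith

lemma eq_mul_exp_arg_div_mul_I (hx : ‖x‖ = 1) (hy : ‖y‖ = 1) :
    x = y * exp (arg (x / y) * I) := by
  have hy0 : y ≠ 0 := norm_ne_zero_iff.1 (by rw [hy]; exact one_ne_zero)
  have := norm_mul_exp_arg_mul_I (x / y)
  rw [norm_div, hx, hy, div_one, ofReal_one, one_mul] at this
  rw [this, mul_div_cancel₀ _ hy0]

noncomputable def argLift (z : ℕ → ℂ) : ℕ → ℝ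
  | 0 => arg (z 0)
  | i + 1 => argLift z i + arg (z (i + 1) / z i)

lemma exp_argLift_mul_I {z : ℕ → ℂ} {n : ℕ} (hz : ∀ i ≤ n, ‖z i‖ = 1) :
    ∀ i ≤ n, exp (argLift z i * I) = z i
  | 0, _ => by
    simpa [argLift] using (eq_mul_exp_arg_div_mul_I (hz 0 (Nat.zero_le n)) norm_one).symm
  | i + 1, hi => by
    rw [argLift, ofReal_add, add_mul, exp_add, exp_argLift_mul_I hz i (by omega)]
    exact (eq_mul_exp_arg_div_mul_I (hz (i + 1) hi) (hz i (by omega))).symm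

lemma abs_argLift_succ_sub {z : ℕ → ℂ} {i : ℕ} (hi : z i ≠ 0) (hi' : z (i + 1) ≠ 0) :
    |argLift z (i + 1) - argLift z i| = angle (z (i + 1)) (z i) := by
  rw [argLift, add_sub_cancel_left, angle_eq_abs_arg hi' hi]

end Complex

lemma two_pi_sub_two_mul_le_of_forall_angle_le {S : Set ℝ} {m M c : ℝ} (hS : S ⊆ Icc m M)
    (hcover : ∀ z : ℂ, ‖z‖ = 1 → ∃ θ ∈ S, angle z (exp (θ * I)) ≤ c) :
    2 * π - 2 * c ≤ M - m := by
  by_contra! hlt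
  -- the point of the circle opposite the midpoint of `[m, M]` is farther than `c` from all of `S`
  obtain ⟨θ, hθS, hθ⟩ :=
    hcover (exp (((m + M) / 2 + π : ℝ) * I)) (norm_exp_ofReal_mul_I _)
  obtain ⟨hmθ, hθM⟩ := hS hθS
  rw [angle_exp_exp, ← self_sub_toIocDiv_zsmul, zsmul_eq_mul, abs_le] at hθ
  obtain ⟨hlo, hhi⟩ := hθ
  set k := toIocDiv two_pi_pos (-π) ((m + M) / 2 + π - θ)
  rcases le_or_gt k 0 with hk | hk
  · have : (k : ℝ) * (2 * π) ≤ 0 :=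
      mul_nonpos_of_nonpos_of_nonneg (by exact_mod_cast hk) (by positivity)
    linarith
  · have : 2 * π ≤ (k : ℝ) * (2 * π) :=
      le_mul_of_one_le_left (by positivity) (by exact_mod_cast hk)
    linarith

lemma abs_sub_le_mul_of_forall_abs_succ_sub_le {θ : ℕ → ℝ} {n : ℕ} {d : ℝ}
    (hstep : ∀ i < n, |θ (i + 1) - θ i| ≤ d) {i j : ℕ} (hi : i ≤ n) (hj : j ≤ n) :
    |θ i - θ j| ≤ n * d := by
  wlog hij : i ≤ j generalizing i j
  · rw [abs_sub_comm]; exact this hj hi (by omega)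
  obtain rfl | hn := n.eq_zero_or_pos
  · simp [show i = 0 by omega, show j = 0 by omega]
  have hd : 0 ≤ d := (abs_nonneg _).trans (hstep 0 hn)
  calc |θ i - θ j| = dist (θ i) (θ j) := rfl
    _ ≤ ∑ _ ∈ Finset.Ico i j, d := dist_le_Ico_sum_of_dist_le hij fun _ hk =>
        by rw [Real.dist_eq, abs_sub_comm]; exact hstep _ (by omega)
    _ = (j - i : ℕ) * d := by simp
    _ ≤ n * d := by gcongr; omega

lemma two_pi_le_of_forall_angle_le {θ : ℕ → ℝ} {n : ℕ} {c d : ℝ}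
    (hstep : ∀ i < n, |θ (i + 1) - θ i| ≤ d)
    (hcover : ∀ z : ℂ, ‖z‖ = 1 → ∃ i ≤ n, angle z (exp (θ i * I)) ≤ c) :
    2 * π ≤ n * d + 2 * c := by
  obtain ⟨p, hp, hmax⟩ := (Finset.range (n + 1)).exists_max_image θ ⟨0, by simp⟩
  obtain ⟨q, hq, hmin⟩ := (Finset.range (n + 1)).exists_min_image θ ⟨0, by simp⟩
  simp only [Finset.mem_range, Nat.lt_succ_iff] at hp hq hmax hmin
  have hS : θ '' Iic n ⊆ Icc (θ q) (θ p) := by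
    rintro _ ⟨i, hi, rfl⟩
    exact ⟨hmin i hi, hmax i hi⟩
  have hspread : 2 * π - 2 * c ≤ θ p - θ q := by
    refine two_pi_sub_two_mul_le_of_forall_angle_le hS fun z hz => ?_
    obtain ⟨i, hi, hzi⟩ := hcover z hz
    exact ⟨θ i, mem_image_of_mem θ hi, hzi⟩
  have hdiam := abs_sub_le_mul_of_forall_abs_succ_sub_le hstep hp hq
  linarith [le_abs_self (θ p - θ q)]

lemma exists_le_abs_sub_mul_le {h s : ℝ} {n : ℕ} (hh : 0 < h) (hs : s ∈ Icc 0 (n * h)) :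
    ∃ i ≤ n, |s - i * h| ≤ h := by
  have hsh : 0 ≤ s / h := div_nonneg hs.1 hh.le
  refine ⟨⌊s / h⌋₊, Nat.floor_le_of_le ((div_le_iff₀ hh).2 hs.2), ?_⟩
  have hlo : (⌊s / h⌋₊ : ℝ) * h ≤ s := (le_div_iff₀ hh).1 (Nat.floor_le hsh)
  have hhi : s < (⌊s / h⌋₊ + 1) * h := (div_lt_iff₀ hh).1 (Nat.lt_floor_add_one _)
  rw [abs_of_nonneg (by linarith)]
  linarith

lemma two_pi_le_of_lipschitzOnWith_of_image_eq_sphere {a : ℝ} {K : NNReal} {f : ℝ → ℂ}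
    (ha : 0 < a) (hf : LipschitzOnWith K f (Icc 0 a))
    (himg : f '' Icc 0 a = {z : ℂ | ‖z‖ = 1}) {n : ℕ} (hn : 0 < n) :
    2 * π ≤ (K * a + 2 * (K * a / n)) * (1 + (K * a / n) ^ 2 / 3) := by
  set h := a / n
  have hh : 0 < h := by positivity
  have hnh : n * h = a := mul_div_cancel₀ _ (by positivity)
  set φ := K * h + (K * h) ^ 3 / 3 with hφ
  have hunit : ∀ s ∈ Icc 0 a, ‖f s‖ = 1 := fun s hs => himg.subset (mem_image_of_mem f hs)
  have hgrid : ∀ i ≤ n, (i * h : ℝ) ∈ Icc 0 a := fun i hi =>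
    ⟨by positivity, hnh ▸ by gcongr⟩
  have hangle :
      ∀ s ∈ Icc 0 a, ∀ i ≤ n, |s - i * h| ≤ h → angle (f s) (f (i * h)) ≤ φ := by
    intro s hs i hi hsi
    have hchord : ‖f s - f (i * h)‖ ≤ K * h := by
      simpa [← dist_eq_norm, ← Real.dist_eq] using
        (hf.dist_le_mul s hs _ (hgrid i hi)).trans (by gcongr; exact hsi)
    exact (angle_le_norm_sub_add_cube (hunit s hs) (hunit _ (hgrid i hi))).trans
      (by rw [hφ]; gcongr)
  have hne : ∀ i ≤ n, f (i * h) ≠ 0 := fun i hi =>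
    norm_ne_zero_iff.1 (by rw [hunit _ (hgrid i hi)]; exact one_ne_zero)
  set θ := argLift fun i : ℕ => f (i * h)
  have hexp : ∀ i ≤ n, exp (θ i * I) = f (i * h) :=
    exp_argLift_mul_I fun i hi => hunit _ (hgrid i hi)
  have hstep : ∀ i < n, |θ (i + 1) - θ i| ≤ φ := by
    intro i hi
    have hsucc : |((i + 1 : ℕ) : ℝ) * h - i * h| ≤ h := by
      rw [Nat.cast_succ, add_one_mul, add_sub_cancel_left, abs_of_pos hh]
    rw [abs_argLift_succ_sub (hne i hi.le) (hne (i + 1) hi)]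
    exact hangle _ (hgrid _ hi) i hi.le hsucc
  have hcover : ∀ z : ℂ, ‖z‖ = 1 → ∃ i ≤ n, angle z (exp (θ i * I)) ≤ φ := by
    intro z hz
    obtain ⟨s, hs, rfl⟩ := himg.symm.subset hz
    obtain ⟨i, hi, hsi⟩ := exists_le_abs_sub_mul_le hh (hnh.symm ▸ hs)
    exact ⟨i, hi, hexp i hi ▸ hangle s hs i hi hsi⟩
  calc 2 * π ≤ n * φ + 2 * φ := two_pi_le_of_forall_angle_le hstep hcover
    _ = (K * (n * h) + 2 * (K * h)) * (1 + (K * h) ^ 2 / 3) := by ring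
    _ = _ := by rw [hnh, mul_div_assoc]

theorem lipschitz_surjection_onto_circle_length_bound_general (a : ℝ) (K : NNReal)
    (ha : 0 < a) (f : ℝ → ℂ)
    (hf : LipschitzOnWith K f (Set.Icc (0 : ℝ) a))
    (himg : f '' Set.Icc (0 : ℝ) a = {z : ℂ | ‖z‖ = 1}) :
    2 * Real.pi ≤ (K : ℝ) * a := by
  have hmesh := tendsto_const_div_atTop_nhds_zero_nat ((K : ℝ) * a)
  have hlim : Tendsto (fun n : ℕ => (K * a + 2 * (K * a / n)) * (1 + (K * a / n) ^ 2 / 3))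
      atTop (𝓝 (K * a)) := by
    simpa using ((tendsto_const_nhds (x := (K : ℝ) * a)).add (hmesh.const_mul 2)).mul
      ((tendsto_const_nhds (x := (1 : ℝ))).add ((hmesh.pow 2).div_const 3))
  exact ge_of_tendsto hlim <| (eventually_gt_atTop 0).mono fun n hn =>
    two_pi_le_of_lipschitzOnWith_of_image_eq_sphere ha hf himg hn

theorem lipschitz_surjection_onto_circle_length_bound (a : ℝ) (K : NNReal)
    (ha : 0 < a) (hK : 0 < K) (f : ℝ → ℂ)
    (hf : LipschitzOnWith K f (Set.Icc (0 : ℝ) a))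
    (himg : f '' Set.Icc (0 : ℝ) a = {z : ℂ | ‖z‖ = 1}) :
    2 * Real.pi ≤ (K : ℝ) * a :=
  lipschitz_surjection_onto_circle_length_bound_general a K ha f hf himg
end
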